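/- arXiv:2504.08911 — 2 statements merged into one kernel-verified Lean document; each statement's English description precedes it below -/
import Mathlib

section
/- The ideal I_∞ = ⟨ x_a² − 1, x_a x_b − x_{a∧b} x_{a∨b} : a, b ∈ [𝐧] ⟩ ⊂ ℝ[x_a : a ∈ [𝐧]] is real radical; that is, I_∞ equals the vanishing ideal of its real zero set. -/
open MvPolynomial

/-- Multi-index set `[n₁] × ⋯ × [n_d]`. -/
abbrev Idx {d : ℕ} (n : Fin d → ℕ) : Type := ∀ i, Fin (n i)

/-- Componentwise minimum of multi-indices. -/
def amin {d : ℕ} {n : Fin d → ℕ} (a b : Idx n) : Idx n := fun i => min (a i) (b i)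

/-- Componentwise maximum of multi-indices. -/
def amax {d : ℕ} {n : Fin d → ℕ} (a b : Idx n) : Idx n := fun i => max (a i) (b i)

/-- The ideal `I_∞ = ⟨x_a² − 1, x_a x_b − x_{a∧b} x_{a∨b} : a, b ∈ [𝐧]⟩`. -/
noncomputable def Iinf {d : ℕ} (n : Fin d → ℕ) : Ideal (MvPolynomial (Idx n) ℝ) :=
  Ideal.span ({f | ∃ a : Idx n, f = X a ^ 2 - 1} ∪
    {f | ∃ a b : Idx n, f = X a * X b - X (amin a b) * X (amax a b)})

/-!
Modulo the relations `x_a² = 1` every monomial equals a sign monomial `x^v` with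
`v ∈ (ℤ/2)^σ`, and binomial relations `x^u = x^w` identify `x^v` with `x^v'` exactly when
`v - v'` lies in the span `H` of the parity vectors `u - w`. Hence the quotient ring is the group
algebra `K[G]` of the elementary abelian 2-group `G = (ℤ/2)^σ / H`. The `K`-points of the variety
are the sign characters `G → {±1}`, and by Fourier inversion on `G` (which needs `2 ≠ 0` in `K`)
they separate the elements of `K[G]`. So a polynomial vanishing on the variety is zero in `K[G]`,
i.e. lies in the ideal. `I_∞` is the case of the relations `x_a x_b = x_{a∧b} x_{a∨b}`.
-/

section SignCharacters

variable (K : Type*) [CommRing K]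

noncomputable def signChar : AddChar (ZMod 2) K :=
  AddChar.zmodChar 2 (by norm_num : (-1 : K) ^ 2 = 1)

variable {K}

lemma signChar_eq_one_iff [Nontrivial K] (hK : ringChar K ≠ 2) {z : ZMod 2} :
    signChar K z = 1 ↔ z = 0 := by
  rw [signChar, AddChar.zmodChar_apply]
  obtain rfl | rfl : z = 0 ∨ z = 1 := by revert z; decide
  · simp
  · simpa [ZMod.val_one] using Ring.neg_one_ne_one_of_char_ne_two hK

variable {G : Type*} [AddCommGroup G] [Module (ZMod 2) G]

noncomputable def dualChar (w : Module.Dual (ZMod 2) G) : AddChar G K :=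
  (signChar K).compAddMonoidHom w.toAddMonoidHom

lemma sum_dualChar_apply [IsDomain K] (hK : ringChar K ≠ 2)
    [Fintype (Module.Dual (ZMod 2) G)] [DecidableEq G] (g : G) :
    ∑ w : Module.Dual (ZMod 2) G, dualChar (K := K) w g =
      if g = 0 then (Fintype.card (Module.Dual (ZMod 2) G) : K) else 0 := by
  let evalChar : AddChar (Module.Dual (ZMod 2) G) K :=
    (signChar K).compAddMonoidHom (Module.Dual.eval (ZMod 2) G g).toAddMonoidHom
  have h_evalChar : evalChar = 0 ↔ g = 0 := by
    rw [← Module.forall_dual_apply_eq_zero_iff (ZMod 2) g, AddChar.eq_zero_iff]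
    simp [evalChar, signChar_eq_one_iff hK]
  have h_sum := evalChar.sum_eq_ite
  simp only [h_evalChar] at h_sum
  exact h_sum

lemma AddMonoidAlgebra.lift_apply_eq_sum {K G : Type*} [CommSemiring K] [AddMonoid G]
    [Fintype G] (ψ : AddChar G K) (z : AddMonoidAlgebra K G) :
    lift K K G ψ.toMonoidHom z = ∑ g, z.coeff g * ψ g := by
  rw [lift_apply, Finsupp.sum_fintype]
  · rfl
  · simp

lemma sum_dualChar_mul_lift_eq_card_mul_coeff [IsDomain K] (hK : ringChar K ≠ 2) [Fintype G]
    [DecidableEq G] [Fintype (Module.Dual (ZMod 2) G)] (z : AddMonoidAlgebra K G) (h : G) :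
    ∑ w : Module.Dual (ZMod 2) G,
        dualChar w h * AddMonoidAlgebra.lift K K G (dualChar w).toMonoidHom z =
      Fintype.card (Module.Dual (ZMod 2) G) * z.coeff h := by
  calc _ = ∑ g, z.coeff g * ∑ w : Module.Dual (ZMod 2) G, dualChar w (h + g) := by
        simp_rw [AddMonoidAlgebra.lift_apply_eq_sum, Finset.mul_sum, AddChar.map_add_eq_mul]
        rw [Finset.sum_comm]
        simp_rw [mul_left_comm]
    _ = _ := by
        simp_rw [sum_dualChar_apply hK, add_eq_zero_iff_eq_neg, ZModModule.neg_eq_self]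
        simp [mul_comm]

theorem AddMonoidAlgebra.eq_zero_of_forall_lift_dualChar_eq_zero [IsDomain K]
    (hK : ringChar K ≠ 2) [Finite G] {z : AddMonoidAlgebra K G}
    (hz : ∀ w : Module.Dual (ZMod 2) G, lift K K G (dualChar w).toMonoidHom z = 0) : z = 0 := by
  classical
  have : Fintype G := Fintype.ofFinite G
  have : Fintype (Module.Dual (ZMod 2) G) :=
    have : Finite (Module.Dual (ZMod 2) G) := Finite.of_injective _ DFunLike.coe_injective
    Fintype.ofFinite _
  have hcard : (Fintype.card (Module.Dual (ZMod 2) G) : K) ≠ 0 := by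
    rw [Module.card_eq_pow_finrank (K := ZMod 2), ZMod.card, Nat.cast_pow, Nat.cast_two]
    exact pow_ne_zero _ (Ring.two_ne_zero hK)
  ext h
  have h_coeff := sum_dualChar_mul_lift_eq_card_mul_coeff hK z h
  simp only [hz, mul_zero, Finset.sum_const_zero] at h_coeff
  simpa [hcard] using h_coeff.symm

end SignCharacters

noncomputable def AddChar.liftQ {R V M : Type*} [Ring R] [AddCommGroup V] [Module R V]
    [CommMonoid M] (H : Submodule R V) (ψ : AddChar V M) (hψ : ∀ v ∈ H, ψ v = 1) :
    AddChar (V ⧸ H) M :=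
  AddChar.toAddMonoidHomEquiv.symm
    (QuotientAddGroup.lift H.toAddSubgroup ψ.toAddMonoidHom fun v hv => hψ v hv)

lemma AddChar.liftQ_mk {R V M : Type*} [Ring R] [AddCommGroup V] [Module R V] [CommMonoid M]
    (H : Submodule R V) (ψ : AddChar V M) (hψ : ∀ v ∈ H, ψ v = 1) (v : V) :
    AddChar.liftQ H ψ hψ (H.mkQ v) = ψ v :=
  rfl

section SignBinomialIdeal

variable {σ R : Type*} [CommRing R]

def parity : (σ →₀ ℕ) →+ (σ → ZMod 2) where
  toFun u a := u a
  map_zero' := by ext; simp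
  map_add' u v := by ext; simp

lemma parity_apply (u : σ →₀ ℕ) (a : σ) : parity u a = u a := rfl

def parityRelations (B : Set ((σ →₀ ℕ) × (σ →₀ ℕ))) : Submodule (ZMod 2) (σ → ZMod 2) :=
  Submodule.span (ZMod 2) ((fun p => parity p.1 - parity p.2) '' B)

abbrev ParityGroup (B : Set ((σ →₀ ℕ) × (σ →₀ ℕ))) := (σ → ZMod 2) ⧸ parityRelations B

variable (R) in
noncomputable def signBinomialIdeal (B : Set ((σ →₀ ℕ) × (σ →₀ ℕ))) :
    Ideal (MvPolynomial σ R) :=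
  Ideal.span (Set.range (fun a => X a ^ 2 - 1) ∪ (fun p => monomial p.1 1 - monomial p.2 1) '' B)

variable (R) in
/-- `MvPolynomial σ R` is by definition `AddMonoidAlgebra R (σ →₀ ℕ)`: exponents are pushed
forward to `ParityGroup B`. -/
noncomputable def toParityGroupAlgebra (B : Set ((σ →₀ ℕ) × (σ →₀ ℕ))) :
    MvPolynomial σ R →ₐ[R] AddMonoidAlgebra R (ParityGroup B) :=
  AddMonoidAlgebra.mapDomainAlgHom R R ((parityRelations B).mkQ.toAddMonoidHom.comp parity)

variable {B : Set ((σ →₀ ℕ) × (σ →₀ ℕ))}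

lemma toParityGroupAlgebra_monomial (u : σ →₀ ℕ) (c : R) :
    toParityGroupAlgebra R B (monomial u c) =
      AddMonoidAlgebra.single ((parityRelations B).mkQ (parity u)) c :=
  AddMonoidAlgebra.mapDomain_single

lemma signBinomialIdeal_le_ker :
    signBinomialIdeal R B ≤ RingHom.ker (toParityGroupAlgebra R B) := by
  rw [signBinomialIdeal, Ideal.span_le]
  rintro _ (⟨a, rfl⟩ | ⟨p, hp, rfl⟩) <;>
    simp only [SetLike.mem_coe, RingHom.mem_ker, map_sub, sub_eq_zero]
  · have h_parity : parity (Finsupp.single a 2) = 0 := by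
      classical
      ext b
      rw [Pi.zero_apply, parity_apply, Finsupp.single_apply]
      split_ifs <;> rfl
    rw [X_pow_eq_monomial, toParityGroupAlgebra_monomial, h_parity, map_zero, map_one,
      AddMonoidAlgebra.one_def]
  · rw [toParityGroupAlgebra_monomial, toParityGroupAlgebra_monomial]
    congr 1
    rw [Submodule.mkQ_apply, Submodule.mkQ_apply, Submodule.Quotient.eq]
    exact Submodule.subset_span ⟨p, hp, rfl⟩

lemma mk_X_sq_eq_one (a : σ) : Ideal.Quotient.mk (signBinomialIdeal R B) (X a) ^ 2 = 1 := by
  rw [← map_pow, ← map_one (Ideal.Quotient.mk _), Ideal.Quotient.eq]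
  exact Ideal.subset_span (Or.inl ⟨a, rfl⟩)

lemma mk_monomial_eq_of_mem {p : (σ →₀ ℕ) × (σ →₀ ℕ)} (hp : p ∈ B) :
    Ideal.Quotient.mk (signBinomialIdeal R B) (monomial p.1 1) =
      Ideal.Quotient.mk (signBinomialIdeal R B) (monomial p.2 1) := by
  rw [Ideal.Quotient.eq]
  exact Ideal.subset_span (Or.inr ⟨p, hp, rfl⟩)

variable [Fintype σ]

variable (R B) in
noncomputable def signMonomial :
    AddChar (σ → ZMod 2) (MvPolynomial σ R ⧸ signBinomialIdeal R B) :=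
  ∏ a, (AddChar.zmodChar 2 (mk_X_sq_eq_one a)).compAddMonoidHom (Pi.evalAddMonoidHom _ a)

lemma signMonomial_parity (u : σ →₀ ℕ) :
    signMonomial R B (parity u) = Ideal.Quotient.mk _ (monomial u 1) := by
  rw [monomial_eq, Finsupp.prod_fintype _ _ fun _ => pow_zero _, C_1, one_mul, map_prod,
    signMonomial, AddChar.prod_apply]
  refine Finset.prod_congr rfl fun a _ => ?_
  rw [AddChar.compAddMonoidHom_apply, AddChar.zmodChar_apply, map_pow, Pi.evalAddMonoidHom_apply,
    parity_apply, ZMod.val_natCast, ← pow_eq_pow_mod _ (mk_X_sq_eq_one a)]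

lemma signMonomial_eq_one_of_mem {v : σ → ZMod 2} (hv : v ∈ parityRelations B) :
    signMonomial R B v = 1 := by
  have h_sq (v : σ → ZMod 2) : signMonomial R B v * signMonomial R B v = 1 := by
    rw [← AddChar.map_add_eq_mul, ZModModule.add_self, AddChar.map_zero_eq_one]
  induction hv using Submodule.span_induction with
  | mem x hx =>
    obtain ⟨p, hp, rfl⟩ := hx
    change signMonomial R B (parity p.1 - parity p.2) = 1
    rw [ZModModule.sub_eq_add, AddChar.map_add_eq_mul, signMonomial_parity,
      mk_monomial_eq_of_mem hp, ← signMonomial_parity, h_sq]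
  | zero => exact AddChar.map_zero_eq_one _
  | add x y _ _ hx hy => rw [AddChar.map_add_eq_mul, hx, hy, one_mul]
  | smul c x _ hx =>
    obtain rfl | rfl : c = 0 ∨ c = 1 := by revert c; decide
    · rw [zero_smul, AddChar.map_zero_eq_one]
    · rwa [one_smul]

variable (R B) in
noncomputable def ofParityGroupAlgebra :
    AddMonoidAlgebra R (ParityGroup B) →ₐ[R] MvPolynomial σ R ⧸ signBinomialIdeal R B :=
  AddMonoidAlgebra.lift R _ (ParityGroup B)
    (AddChar.liftQ _ (signMonomial R B) fun _ => signMonomial_eq_one_of_mem).toMonoidHom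

lemma ofParityGroupAlgebra_comp_toParityGroupAlgebra :
    (ofParityGroupAlgebra R B).comp (toParityGroupAlgebra R B) =
      Ideal.Quotient.mkₐ R (signBinomialIdeal R B) := by
  refine MvPolynomial.algHom_ext fun a => ?_
  rw [AlgHom.comp_apply, X, toParityGroupAlgebra_monomial, ofParityGroupAlgebra,
    AddMonoidAlgebra.lift_single, one_smul, AddChar.toMonoidHom_apply, toAdd_ofAdd,
    AddChar.liftQ_mk, signMonomial_parity]
  rfl

theorem ker_toParityGroupAlgebra :
    RingHom.ker (toParityGroupAlgebra R B) = signBinomialIdeal R B := by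
  refine le_antisymm (fun f hf => ?_) signBinomialIdeal_le_ker
  rw [← Ideal.Quotient.eq_zero_iff_mem, ← Ideal.Quotient.mkₐ_eq_mk R,
    ← ofParityGroupAlgebra_comp_toParityGroupAlgebra, AlgHom.comp_apply, RingHom.mem_ker.1 hf,
    map_zero]

end SignBinomialIdeal

section Zeros

variable {σ K : Type*} [CommRing K] {B : Set ((σ →₀ ℕ) × (σ →₀ ℕ))}

noncomputable def dualPoint (w : Module.Dual (ZMod 2) (ParityGroup B)) : σ → K :=
  fun a => dualChar w ((parityRelations B).mkQ (parity (Finsupp.single a 1)))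

lemma eval_dualPoint (w : Module.Dual (ZMod 2) (ParityGroup B)) (f : MvPolynomial σ K) :
    eval (dualPoint w) f =
      AddMonoidAlgebra.lift K K _ (dualChar w).toMonoidHom (toParityGroupAlgebra K B f) := by
  have h_hom : aeval (dualPoint w) =
      (AddMonoidAlgebra.lift K K _ (dualChar w).toMonoidHom).comp (toParityGroupAlgebra K B) :=
    algHom_ext fun a => by
      rw [aeval_X, AlgHom.comp_apply, X, toParityGroupAlgebra_monomial,
        AddMonoidAlgebra.lift_single, one_smul]
      rfl
  rw [← coe_aeval_eq_eval, h_hom]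
  rfl

theorem mem_signBinomialIdeal_iff [Fintype σ] [IsDomain K] (hK : ringChar K ≠ 2)
    (f : MvPolynomial σ K) :
    f ∈ signBinomialIdeal K B ↔
      ∀ x : σ → K, (∀ g ∈ signBinomialIdeal K B, eval x g = 0) → eval x f = 0 := by
  refine ⟨fun hf x hx => hx f hf, fun hf => ?_⟩
  have : Finite (ParityGroup B) := Finite.of_surjective _ (Submodule.mkQ_surjective _)
  rw [← ker_toParityGroupAlgebra, RingHom.mem_ker]
  refine AddMonoidAlgebra.eq_zero_of_forall_lift_dualChar_eq_zero hK fun w => ?_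
  rw [← eval_dualPoint]
  refine hf _ fun g hg => ?_
  rw [eval_dualPoint, signBinomialIdeal_le_ker hg, map_zero]

end Zeros

def minMaxRelations {d : ℕ} (n : Fin d → ℕ) : Set ((Idx n →₀ ℕ) × (Idx n →₀ ℕ)) :=
  Set.range fun ab : Idx n × Idx n =>
    (Finsupp.single ab.1 1 + Finsupp.single ab.2 1,
      Finsupp.single (amin ab.1 ab.2) 1 + Finsupp.single (amax ab.1 ab.2) 1)

lemma Iinf_eq_signBinomialIdeal {d : ℕ} (n : Fin d → ℕ) :
    Iinf n = signBinomialIdeal ℝ (minMaxRelations n) := by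
  have h_mul (a b : Idx n) :
      X a * X b = monomial (Finsupp.single a 1 + Finsupp.single b 1) (1 : ℝ) := by
    rw [X, X, monomial_mul, one_mul]
  rw [Iinf, signBinomialIdeal, minMaxRelations]
  congr 2
  · ext f; simp [eq_comm]
  · ext f; simp [h_mul, eq_comm]

/-- `I_∞` is real radical: it equals the vanishing ideal of its real zero set, i.e.
a polynomial lies in `I_∞` iff it vanishes on all real common zeros of `I_∞`. -/
theorem Iinf_realRadical {d : ℕ} (n : Fin d → ℕ) (f : MvPolynomial (Idx n) ℝ) :
    f ∈ Iinf n ↔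
      ∀ x : Idx n → ℝ, (∀ g ∈ Iinf n, eval x g = 0) → eval x f = 0 := by
  rw [Iinf_eq_signBinomialIdeal]
  exact mem_signBinomialIdeal_iff (by simp [ringChar.eq_zero]) f
end

section
/- The binomial ideal I₀ = ⟨ x_a x_b − x_{a∧b} x_{a∨b} : a, b ∈ [𝐧] ⟩ ⊂ ℝ[x_a : a ∈ [𝐧]] is real radical: if a sum of squares Σ_{i=1}^l f_i² lies in I₀, then every f_i lies in I₀. -/
open MvPolynomial

/-- The rank-1 binomial ideal `I₀ = ⟨x_a x_b − x_{a∧b} x_{a∨b} : a, b ∈ [𝐧]⟩`. -/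
noncomputable def I0 {d : ℕ} (n : Fin d → ℕ) : Ideal (MvPolynomial (Idx n) ℝ) :=
  Ideal.span {f | ∃ a b : Idx n, f = X a * X b - X (amin a b) * X (amax a b)}

/-
`I₀` is the kernel of the toric map `φ : x_a ↦ t · ∏ᵢ y_{i,aᵢ}` into a real polynomial ring. A sum
of squares of real polynomials vanishes only when every term does, so `Σ fᵢ² ∈ ker φ` gives
`φ fᵢ = 0` for every `i`.

`I₀ ⊆ ker φ` because `{a ∧ b, a ∨ b}` has the same coordinates as `{a, b}`. Conversely, modulo `I₀`
every monomial straightens to one whose indices form a chain: replacing `x_a x_b` by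
`x_{a∧b} x_{a∨b}` for incomparable `a, b` strictly increases `Σ rank(a)²`, which is bounded in
fixed degree. A chain monomial is determined by its image under `φ`, since its top element is the
componentwise maximum of the coordinates occurring in the image, and peeling it off leaves a
shorter chain. So `φ` is injective on polynomials supported on chains, and an element of `ker φ`
straightens to `0`.
-/

theorem Nat.sq_add_sq_lt_sq_add_sq {s t p q : ℕ} (h : p + q = s + t) (hs : s < q) (ht : t < q) :
    s ^ 2 + t ^ 2 < p ^ 2 + q ^ 2 := by
  zify at *
  nlinarith [mul_pos (sub_pos.2 hs) (sub_pos.2 ht)]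

theorem Finset.sup'_mem_of_isChain {α : Type*} [Lattice α] {s : Finset α}
    (hs : IsChain (· ≤ ·) (s : Set α)) (hne : s.Nonempty) : s.sup' hne id ∈ s := by
  refine Finset.sup'_mem (s : Set α) (fun x hx y hy => ?_) s hne id fun _ => id
  rcases hs.total hx hy with h | h
  · rwa [sup_of_le_right h]
  · rwa [sup_of_le_left h]

namespace Finsupp

variable {ι : Type*} {u : ι →₀ ℕ} {a b : ι}

theorem exists_eq_add_single (ha : a ∈ u.support) : ∃ w, u = w + single a 1 :=
  ⟨u - single a 1, (tsub_add_cancel_of_le (single_le_iff.2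
    (Nat.one_le_iff_ne_zero.2 (mem_support_iff.1 ha)))).symm⟩

theorem exists_eq_add_single_add_single (hab : a ≠ b) (ha : a ∈ u.support)
    (hb : b ∈ u.support) : ∃ w, u = w + single a 1 + single b 1 := by
  obtain ⟨v, rfl⟩ := exists_eq_add_single ha
  obtain ⟨w, rfl⟩ := exists_eq_add_single (a := b) (by simpa [single_apply, hab] using hb)
  exact ⟨w, add_right_comm _ _ _⟩

end Finsupp

namespace MvPolynomial

variable {σ τ R : Type*}

theorem eq_zero_of_sum_sq_eq_zero {ι : Type*} [CommRing R] [LinearOrder R]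
    [IsStrictOrderedRing R] [Fintype ι] {f : ι → MvPolynomial σ R}
    (h : ∑ i, f i ^ 2 = 0) (i : ι) : f i = 0 := by
  refine MvPolynomial.funext fun x => ?_
  have hx : ∑ j, eval x (f j) ^ 2 = 0 := by simpa using congrArg (eval x) h
  simpa using (Finset.sum_eq_zero_iff_of_nonneg fun j _ => sq_nonneg _).1 hx i (Finset.mem_univ i)

section CommSemiring

variable [CommSemiring R]

theorem mapDomain_monomial (f : (σ →₀ ℕ) → τ →₀ ℕ) (u : σ →₀ ℕ) (c : R) :
    AddMonoidAlgebra.mapDomain f (monomial u c) = monomial (f u) c :=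
  AddMonoidAlgebra.mapDomain_single

theorem support_mapDomain_subset (f : (σ →₀ ℕ) → τ →₀ ℕ) (p : MvPolynomial σ R) :
    ↑(support (AddMonoidAlgebra.mapDomain f p : MvPolynomial τ R)) ⊆ f '' p.support := by
  classical
  have := Finset.coe_subset.2 (Finsupp.mapDomain_support (f := f) (s := AddMonoidAlgebra.coeff p))
  rwa [Finset.coe_image] at this

theorem coeff_mapDomain_of_injOn {f : (σ →₀ ℕ) → τ →₀ ℕ} {S : Set (σ →₀ ℕ)}
    {p : MvPolynomial σ R} (hp : ↑p.support ⊆ S) (hf : S.InjOn f) {u : σ →₀ ℕ} (hu : u ∈ S) :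
    coeff (f u) (AddMonoidAlgebra.mapDomain f p) = coeff u p :=
  Finsupp.mapDomain_apply' S (AddMonoidAlgebra.coeff p) hp hf hu

end CommSemiring

theorem sub_mapDomain_mem [CommRing R] {I : Ideal (MvPolynomial σ R)}
    {f : (σ →₀ ℕ) → σ →₀ ℕ} (hf : ∀ u, monomial u (1 : R) - monomial (f u) 1 ∈ I)
    (p : MvPolynomial σ R) : p - AddMonoidAlgebra.mapDomain f p ∈ I := by
  induction p using MvPolynomial.induction_on' with
  | monomial u c =>
    rw [mapDomain_monomial, ← mul_one c, ← smul_eq_mul, map_smul, map_smul, ← smul_sub]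
    exact I.smul_of_tower_mem c (hf u)
  | add p q hp hq =>
    rw [AddMonoidAlgebra.mapDomain_add, add_sub_add_comm]
    exact I.add_mem hp hq

end MvPolynomial

section MultiIndex

variable {d : ℕ} {n : Fin d → ℕ}

@[simp]
theorem amin_apply (a b : Idx n) (i : Fin d) : amin a b i = min (a i) (b i) := rfl

@[simp]
theorem amax_apply (a b : Idx n) (i : Fin d) : amax a b i = max (a i) (b i) := rfl

theorem amax_comm (a b : Idx n) : amax a b = amax b a :=
  funext fun i => max_comm (a i) (b i)

end MultiIndex

namespace I0

open Finsupp (single weight)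

variable {d : ℕ} {n : Fin d → ℕ}

abbrev ToricVar (n : Fin d → ℕ) : Type := Option ((i : Fin d) × Fin (n i))

noncomputable def toricExponent (a : Idx n) : ToricVar n →₀ ℕ :=
  single none 1 + ∑ i, single (some ⟨i, a i⟩) 1

theorem toricExponent_none (a : Idx n) : toricExponent a none = 1 := by
  simp [toricExponent]

theorem toricExponent_some (a : Idx n) (i : Fin d) (c : Fin (n i)) :
    toricExponent a (some ⟨i, c⟩) = if a i = c then 1 else 0 := by
  rw [toricExponent, Finsupp.add_apply, Finsupp.single_eq_of_ne (by simp), zero_add,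
    Finset.sum_apply', Finset.sum_eq_single i]
  · simp [Finsupp.single_apply]
  · intro j _ hj
    exact Finsupp.single_eq_of_ne (by simp [hj.symm])
  · simp

theorem toricExponent_amin_add_amax (a b : Idx n) :
    toricExponent (amin a b) + toricExponent (amax a b) = toricExponent a + toricExponent b := by
  ext (_ | ⟨i, c⟩)
  · simp [toricExponent_none]
  · rcases le_total (a i) (b i) with h | h
    · simp [toricExponent_some, min_eq_left h, max_eq_right h]
    · simp [toricExponent_some, min_eq_right h, max_eq_left h, add_comm]

/-- `x_a ↦ t · ∏ᵢ y_{i,aᵢ}`, with `t = none` and `y_{i,c} = some ⟨i, c⟩`. The factor `t` makes the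
degree recoverable from the image, which matters when `d = 0`. -/
noncomputable def toricHom (n : Fin d → ℕ) :
    MvPolynomial (Idx n) ℝ →ₐ[ℝ] MvPolynomial (ToricVar n) ℝ :=
  AddMonoidAlgebra.mapDomainAlgHom ℝ ℝ (weight toricExponent)

theorem toricHom_apply (p : MvPolynomial (Idx n) ℝ) :
    toricHom n p = AddMonoidAlgebra.mapDomain (weight toricExponent) p :=
  rfl

theorem toricHom_X (a : Idx n) : toricHom n (X a) = monomial (toricExponent a) 1 := by
  rw [toricHom_apply, X, mapDomain_monomial, Finsupp.weight_single, one_smul]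

theorem I0_le_ker_toricHom : I0 n ≤ RingHom.ker (toricHom n) := by
  rw [I0, Ideal.span_le]
  rintro _ ⟨a, b, rfl⟩
  simp [toricHom_X, monomial_mul, toricExponent_amin_add_amax]

theorem weight_toricExponent_none (u : Idx n →₀ ℕ) :
    weight toricExponent u none = u.degree := by
  simp [Finsupp.weight_apply, Finsupp.sum, toricExponent_none, Finsupp.degree_apply]

theorem weight_toricExponent_some_ne_zero_iff (u : Idx n →₀ ℕ) (i : Fin d) (c : Fin (n i)) :
    weight toricExponent u (some ⟨i, c⟩) ≠ 0 ↔ ∃ a ∈ u.support, a i = c := by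
  simp [Finsupp.weight_apply, Finsupp.sum, toricExponent_some, Finset.sum_eq_zero_iff,
    and_comm, and_left_comm]

def rank (a : Idx n) : ℕ := ∑ i, (a i : ℕ)

theorem rank_le (a : Idx n) : rank a ≤ ∑ i, n i :=
  Finset.sum_le_sum fun i _ => (a i).isLt.le

theorem rank_amin_add_rank_amax (a b : Idx n) :
    rank (amin a b) + rank (amax a b) = rank a + rank b := by
  simp only [rank, ← Finset.sum_add_distrib, amin_apply, amax_apply]
  refine Finset.sum_congr rfl fun i _ => ?_
  rcases le_total (a i) (b i) with h | h
  · simp [min_eq_left h, max_eq_right h]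
  · simp [min_eq_right h, max_eq_left h, add_comm]

theorem rank_lt_rank_amax {a b : Idx n} (h : ¬ b ≤ a) : rank a < rank (amax a b) := by
  obtain ⟨i, hi⟩ := by simpa [Pi.le_def] using h
  refine Finset.sum_lt_sum (fun j _ => ?_) ⟨i, Finset.mem_univ i, ?_⟩
  · exact Fin.le_def.1 (le_max_left (a j) (b j))
  · rw [amax_apply, max_eq_right hi.le]
    exact hi

noncomputable def energy : (Idx n →₀ ℕ) →+ ℕ := weight fun a => rank a ^ 2

theorem energy_le (u : Idx n →₀ ℕ) : energy u ≤ u.degree * (∑ i, n i) ^ 2 := by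
  rw [energy, Finsupp.weight_apply, Finsupp.degree_apply, Finset.sum_mul]
  exact Finset.sum_le_sum fun a _ => Nat.mul_le_mul_left _ (Nat.pow_le_pow_left (rank_le a) 2)

theorem monomial_sub_monomial_amin_amax_mem (w : Idx n →₀ ℕ) (a b : Idx n) :
    monomial (w + single a 1 + single b 1) (1 : ℝ) -
      monomial (w + single (amin a b) 1 + single (amax a b) 1) 1 ∈ I0 n := by
  have h (x y : Idx n) :
      monomial (w + single x 1 + single y 1) (1 : ℝ) = monomial w 1 * (X x * X y) := by
    simp only [X, monomial_mul, mul_one, add_assoc]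
  rw [h, h, ← mul_sub]
  exact Ideal.mul_mem_left _ _ (Ideal.subset_span ⟨a, b, rfl⟩)

theorem exists_energy_lt_of_not_isChain {u : Idx n →₀ ℕ}
    (hu : ¬ IsChain (· ≤ ·) (u.support : Set (Idx n))) :
    ∃ u', u'.degree = u.degree ∧ energy u < energy u' ∧
      monomial u (1 : ℝ) - monomial u' 1 ∈ I0 n := by
  obtain ⟨a, ha, b, hb, hne, hab, hba⟩ :
      ∃ a ∈ u.support, ∃ b ∈ u.support, a ≠ b ∧ ¬ a ≤ b ∧ ¬ b ≤ a := by
    simpa [IsChain, Set.Pairwise] using hu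
  obtain ⟨w, rfl⟩ := Finsupp.exists_eq_add_single_add_single hne ha hb
  refine ⟨w + single (amin a b) 1 + single (amax a b) 1, ?_, ?_,
    monomial_sub_monomial_amin_amax_mem w a b⟩
  · simp only [map_add, Finsupp.degree_single]
  · simp only [map_add, energy, Finsupp.weight_single, one_smul, add_assoc]
    have := Nat.sq_add_sq_lt_sq_add_sq (rank_amin_add_rank_amax a b) (rank_lt_rank_amax hba)
      (amax_comm a b ▸ rank_lt_rank_amax hab)
    omega

theorem exists_isChain_sub_mem (u : Idx n →₀ ℕ) :
    ∃ v, IsChain (· ≤ ·) (v.support : Set (Idx n)) ∧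
      monomial u (1 : ℝ) - monomial v 1 ∈ I0 n := by
  induction hm : u.degree * (∑ i, n i) ^ 2 - energy u using Nat.strong_induction_on
    generalizing u with
  | _ m ih =>
    by_cases hu : IsChain (· ≤ ·) (u.support : Set (Idx n))
    · exact ⟨u, hu, by simp⟩
    obtain ⟨u', hdeg, hlt, hmem⟩ := exists_energy_lt_of_not_isChain hu
    have := hdeg ▸ energy_le u'
    obtain ⟨v, hv, hvmem⟩ := ih _ (by rw [hdeg]; omega) u' rfl
    exact ⟨v, hv, by simpa using Ideal.add_mem _ hmem hvmem⟩

theorem le_of_weight_toricExponent_eq {u v : Idx n →₀ ℕ}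
    (h : weight toricExponent u = weight toricExponent v) {a m : Idx n}
    (ha : a ∈ u.support) (hm : ∀ b ∈ v.support, b ≤ m) : a ≤ m := by
  intro i
  obtain ⟨b, hb, hbi⟩ := (weight_toricExponent_some_ne_zero_iff v i (a i)).1
    (h ▸ (weight_toricExponent_some_ne_zero_iff u i (a i)).2 ⟨a, ha, rfl⟩)
  exact hbi ▸ hm b hb i

theorem eq_of_isChain_of_weight_toricExponent_eq {u v : Idx n →₀ ℕ}
    (hu : IsChain (· ≤ ·) (u.support : Set (Idx n)))
    (hv : IsChain (· ≤ ·) (v.support : Set (Idx n)))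
    (h : weight toricExponent u = weight toricExponent v) : u = v := by
  have hdeg : u.degree = v.degree := by
    rw [← weight_toricExponent_none, h, weight_toricExponent_none]
  induction hk : u.degree generalizing u v with
  | zero =>
    rw [(Finsupp.degree_eq_zero_iff u).1 hk, (Finsupp.degree_eq_zero_iff v).1 (hdeg ▸ hk)]
  | succ k ih =>
    have hu₀ : u.support.Nonempty := Finsupp.support_nonempty_iff.2 (by rintro rfl; simp at hk)
    have hv₀ : v.support.Nonempty := Finsupp.support_nonempty_iff.2 (by rintro rfl; simp_all)
    obtain ⟨a, hua, hva⟩ : ∃ a, a ∈ u.support ∧ a ∈ v.support := by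
      have hua := Finset.sup'_mem_of_isChain hu hu₀
      have hva := Finset.sup'_mem_of_isChain hv hv₀
      have htop : u.support.sup' hu₀ id = v.support.sup' hv₀ id :=
        le_antisymm (le_of_weight_toricExponent_eq h hua fun b hb => Finset.le_sup' id hb)
          (le_of_weight_toricExponent_eq h.symm hva fun b hb => Finset.le_sup' id hb)
      exact ⟨_, hua, htop ▸ hva⟩
    obtain ⟨u₁, rfl⟩ := Finsupp.exists_eq_add_single hua
    obtain ⟨v₁, rfl⟩ := Finsupp.exists_eq_add_single hva
    simp only [map_add, Finsupp.degree_single, add_left_inj] at h hdeg hk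
    rw [ih (hu.mono (Finsupp.support_mono le_self_add))
      (hv.mono (Finsupp.support_mono le_self_add)) h hdeg hk]

theorem ker_toricHom : RingHom.ker (toricHom n) = I0 n := by
  refine le_antisymm (fun p hp => ?_) I0_le_ker_toricHom
  choose nf hchain hnf using exists_isChain_sub_mem (n := n)
  set g : MvPolynomial (Idx n) ℝ := AddMonoidAlgebra.mapDomain nf p
  have hpg : p - g ∈ I0 n := sub_mapDomain_mem hnf p
  have hg : toricHom n g = 0 := by
    simpa [RingHom.mem_ker.1 hp] using I0_le_ker_toricHom hpg
  have hgchain : ↑g.support ⊆ {v : Idx n →₀ ℕ | IsChain (· ≤ ·) (v.support : Set (Idx n))} :=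
    (support_mapDomain_subset nf p).trans (Set.image_subset_iff.2 fun u _ => hchain u)
  suffices g = 0 by simpa [this] using hpg
  ext v
  by_cases hv : IsChain (· ≤ ·) (v.support : Set (Idx n))
  · rw [← coeff_mapDomain_of_injOn hgchain
      (fun _ hx _ hy => eq_of_isChain_of_weight_toricExponent_eq hx hy) hv]
    simp [← toricHom_apply, hg]
  · exact notMem_support_iff.1 fun h => hv (hgchain h)

end I0

/-- `I₀` is real radical: if a sum of squares `Σ_{i=1}^l f_i²` lies in `I₀`, then every
`f_i` lies in `I₀`. -/
theorem I0_realRadical {d : ℕ} (n : Fin d → ℕ) (l : ℕ)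
    (f : Fin l → MvPolynomial (Idx n) ℝ)
    (hsum : (∑ i, (f i) ^ 2) ∈ I0 n) :
    ∀ i, f i ∈ I0 n := by
  simp only [← I0.ker_toricHom, RingHom.mem_ker, map_sum, map_pow] at hsum ⊢
  exact MvPolynomial.eq_zero_of_sum_sq_eq_zero hsum
end
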